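/- Let M ≥ n + d, C ∈ ℝ^{M×n}, D ∈ ℝ^{M×d}, and let [C, D] = UΣVᵀ be a singular value decomposition with singular values σ₁ ≥ … ≥ σ_{n+d} > 0 satisfying σ_n > σ_{n+1}, and with V₂₂ ∈ ℝ^{d×d} (the lower-right d×d block of V) invertible. Then the minimum of ‖[Ẽ, G̃]‖_F over all (X, Ẽ, G̃) satisfying (C + Ẽ)X = D + G̃ equals (σ_{n+1}² + σ_{n+2}² + … + σ_{n+d}²)^{1/2}. -/

import Mathlib

open Matrix

/-- The Frobenius norm of a real matrix. -/
noncomputable def frob {α β : Type*} [Fintype α] [Fintype β] (M : Matrix α β ℝ) : ℝ :=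
  Real.sqrt (∑ i, ∑ j, M i j ^ 2)

/-- `X` is a real TLS solution for data `C, D`: there exist perturbations `Ẽ, G̃` with
`(C + Ẽ) X = D + G̃` attaining the minimum of `‖[Ẽ, G̃]‖_F` among all feasible triples
`(X', Ẽ', G̃')`. -/
def IsTLSSol {M n d : ℕ}
    (C : Matrix (Fin M) (Fin n) ℝ) (D : Matrix (Fin M) (Fin d) ℝ)
    (X : Matrix (Fin n) (Fin d) ℝ) : Prop :=
  ∃ (E : Matrix (Fin M) (Fin n) ℝ) (G : Matrix (Fin M) (Fin d) ℝ),
    (C + E) * X = D + G ∧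
    ∀ (E' : Matrix (Fin M) (Fin n) ℝ) (G' : Matrix (Fin M) (Fin d) ℝ)
      (X' : Matrix (Fin n) (Fin d) ℝ),
      (C + E') * X' = D + G' → frob (fromCols E G) ≤ frob (fromCols E' G')

/-!
With `A = [C, D]`, `Δ = [Ẽ, G̃]` and `W = [X; -I]`, feasibility reads `(A + Δ) W = 0`. If `P` is
the orthogonal projector onto the column space of `W`, then `Δ P = -A P`, so
`‖Δ‖² ≥ ‖A P‖² = Σⱼ σⱼ² (VᵀPV)ⱼⱼ`. The weights `(VᵀPV)ⱼⱼ` lie in `[0, 1]` and sum to `rank P = d`,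
so this is at least the sum of the `d` smallest `σⱼ²`. Equality holds for `X = -V₁₂ V₂₂⁻¹`, whose
`W` spans the last `d` right singular vectors, and `Δ = -A P`.
-/

noncomputable def frobSq {m k : Type*} [Fintype m] [Fintype k] (A : Matrix m k ℝ) : ℝ :=
  ∑ i, ∑ j, A i j ^ 2

section Frobenius

variable {m k : Type*} [Fintype m] [Fintype k]

lemma frobSq_eq_trace (A : Matrix m k ℝ) : frobSq A = trace (Aᵀ * A) := by
  simp only [frobSq, trace, diag_apply, mul_apply, transpose_apply, sq]
  exact Finset.sum_comm

lemma frobSq_nonneg (A : Matrix m k ℝ) : 0 ≤ frobSq A := by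
  unfold frobSq; positivity

@[simp]
lemma frobSq_neg (A : Matrix m k ℝ) : frobSq (-A) = frobSq A := by
  simp [frobSq]

lemma IsStarProjection.transpose_eq {P : Matrix k k ℝ} (hP : IsStarProjection P) : Pᵀ = P := by
  simpa [IsSelfAdjoint, star_eq_conjTranspose, conjTranspose_eq_transpose_of_trivial] using
    hP.isSelfAdjoint

lemma frobSq_mul_eq_trace {P : Matrix k k ℝ} (hP : IsStarProjection P) (A : Matrix m k ℝ) :
    frobSq (A * P) = trace (Aᵀ * A * P) := by
  rw [frobSq_eq_trace, transpose_mul, hP.transpose_eq, Matrix.mul_assoc, trace_mul_comm,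
    Matrix.mul_assoc, Matrix.mul_assoc, hP.isIdempotentElem.eq, ← Matrix.mul_assoc]

lemma frobSq_mul_le [DecidableEq k] {P : Matrix k k ℝ} (hP : IsStarProjection P)
    (A : Matrix m k ℝ) :
    frobSq (A * P) ≤ frobSq A := by
  have hsplit : frobSq A = frobSq (A * P) + frobSq (A * (1 - P)) := by
    rw [frobSq_mul_eq_trace hP, frobSq_mul_eq_trace hP.one_sub, frobSq_eq_trace, mul_sub,
      Matrix.mul_one, trace_sub]
    ring
  linarith [frobSq_nonneg (A * (1 - P))]

lemma IsStarProjection.diag_mem_Icc {P : Matrix k k ℝ} (hP : IsStarProjection P) (j : k) :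
    P j j ∈ Set.Icc 0 1 := by
  have hjj : P j j = ∑ l, P j l ^ 2 := by
    conv_lhs => rw [← hP.isIdempotentElem.eq]
    rw [mul_apply]
    refine Finset.sum_congr rfl fun l _ => ?_
    rw [sq, ← transpose_apply P l j, hP.transpose_eq]
  have hsq : P j j ^ 2 ≤ P j j := hjj ▸ Finset.single_le_sum (f := fun l => P j l ^ 2)
    (fun _ _ => sq_nonneg _) (Finset.mem_univ j)
  have hnonneg : 0 ≤ P j j := hjj ▸ Finset.sum_nonneg fun _ _ => sq_nonneg _
  exact ⟨hnonneg, by nlinarith⟩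

lemma isStarProjection_mul_transpose [DecidableEq m] {Y : Matrix k m ℝ} (hY : Yᵀ * Y = 1) :
    IsStarProjection (Y * Yᵀ) := by
  refine ⟨?_, ?_⟩
  · rw [IsIdempotentElem, Matrix.mul_assoc, ← Matrix.mul_assoc Yᵀ, hY, Matrix.one_mul]
  · rw [IsSelfAdjoint, star_eq_conjTranspose, conjTranspose_eq_transpose_of_trivial,
      transpose_mul, transpose_transpose]

end Frobenius

section Projection

variable {m k : Type*} [Fintype m] [Fintype k] [DecidableEq k]

noncomputable def colProj (W : Matrix m k ℝ) : Matrix m m ℝ := W * (Wᵀ * W)⁻¹ * Wᵀ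

lemma isStarProjection_colProj {W : Matrix m k ℝ} (hW : IsUnit (Wᵀ * W).det) :
    IsStarProjection (colProj W) := by
  refine ⟨?_, ?_⟩
  · rw [IsIdempotentElem, colProj]
    simp only [Matrix.mul_assoc]
    rw [← Matrix.mul_assoc Wᵀ W, ← Matrix.mul_assoc (Wᵀ * W)⁻¹, nonsing_inv_mul _ hW,
      Matrix.one_mul]
  · rw [IsSelfAdjoint, star_eq_conjTranspose, conjTranspose_eq_transpose_of_trivial, colProj,
      transpose_mul, transpose_mul, transpose_transpose, transpose_nonsing_inv, transpose_mul,
      transpose_transpose, Matrix.mul_assoc]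

lemma trace_colProj {W : Matrix m k ℝ} (hW : IsUnit (Wᵀ * W).det) :
    trace (colProj W) = Fintype.card k := by
  rw [colProj, Matrix.mul_assoc, trace_mul_comm, Matrix.mul_assoc, nonsing_inv_mul _ hW,
    trace_one]

lemma isUnit_det_gram_fromRows_neg_one {α : Type*} [Fintype α] (X : Matrix α k ℝ) :
    IsUnit ((fromRows X (-1 : Matrix k k ℝ))ᵀ * fromRows X (-1 : Matrix k k ℝ)).det := by
  have hgram : (fromRows X (-1 : Matrix k k ℝ))ᵀ * fromRows X (-1 : Matrix k k ℝ) =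
      Xᵀ * X + 1 := by
    rw [transpose_fromRows, fromCols_mul_fromRows]
    simp
  have hXX : (Xᵀ * X).PosSemidef := by
    simpa only [conjTranspose_eq_transpose_of_trivial] using posSemidef_conjTranspose_mul_self X
  rw [hgram]
  exact (PosDef.posSemidef_add hXX PosDef.one).det_pos.ne'.isUnit

end Projection

section Orthogonal

variable {m k : Type*} [Fintype m] [Fintype k] [DecidableEq k]

lemma IsStarProjection.transpose_mul_mul {P V : Matrix k k ℝ} (hP : IsStarProjection P)
    (hV : V * Vᵀ = 1) : IsStarProjection (Vᵀ * P * V) := by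
  refine ⟨?_, ?_⟩
  · rw [IsIdempotentElem]
    simp only [Matrix.mul_assoc]
    rw [← Matrix.mul_assoc V Vᵀ, hV, Matrix.one_mul, ← Matrix.mul_assoc P P,
      hP.isIdempotentElem.eq]
  · rw [IsSelfAdjoint, star_eq_conjTranspose, conjTranspose_eq_transpose_of_trivial,
      transpose_mul, transpose_mul, transpose_transpose, hP.transpose_eq, Matrix.mul_assoc]

lemma trace_transpose_mul_mul {P V : Matrix k k ℝ} (hV : V * Vᵀ = 1) :
    trace (Vᵀ * P * V) = trace P := by
  rw [trace_mul_comm, ← Matrix.mul_assoc, hV, Matrix.one_mul]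

lemma frobSq_mul_eq_sum_diag {A : Matrix m k ℝ} {V : Matrix k k ℝ} {s : k → ℝ}
    (hA : Aᵀ * A = V * diagonal s * Vᵀ) {P : Matrix k k ℝ} (hP : IsStarProjection P) :
    frobSq (A * P) = ∑ j, s j * (Vᵀ * P * V) j j := by
  rw [frobSq_mul_eq_trace hP, hA, Matrix.mul_assoc, trace_mul_comm, ← Matrix.mul_assoc, trace]
  exact Finset.sum_congr rfl fun j _ => by rw [diag_apply, mul_diagonal, mul_comm]

end Orthogonal

lemma sum_inr_le_sum_mul {α β : Type*} [Fintype α] [Fintype β] (s c : α ⊕ β → ℝ) (τ : ℝ)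
    (hinr : ∀ j, s (.inr j) ≤ τ) (hinl : ∀ i, τ ≤ s (.inl i))
    (hc : ∀ j, c j ∈ Set.Icc 0 1) (hsum : ∑ j, c j = Fintype.card β) :
    ∑ j, s (.inr j) ≤ ∑ j, s j * c j := by
  have hsum' : ∑ i, c (.inl i) + ∑ j, (c (.inr j) - 1) = 0 := by
    rw [Finset.sum_sub_distrib, ← add_sub_assoc, ← Fintype.sum_sum_type, hsum]
    simp
  have hinl' : ∑ i, τ * c (.inl i) ≤ ∑ i, s (.inl i) * c (.inl i) :=
    Finset.sum_le_sum fun i _ => mul_le_mul_of_nonneg_right (hinl i) (hc _).1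
  have hinr' : ∑ j, τ * (c (.inr j) - 1) ≤ ∑ j, s (.inr j) * (c (.inr j) - 1) :=
    Finset.sum_le_sum fun j _ => mul_le_mul_of_nonpos_right (hinr j) (sub_nonpos.2 (hc _).2)
  have hinr_split : ∑ j, s (.inr j) * (c (.inr j) - 1) =
      ∑ j, s (.inr j) * c (.inr j) - ∑ j, s (.inr j) := by
    simp only [mul_sub, mul_one, Finset.sum_sub_distrib]
  have hτ : ∑ i, τ * c (.inl i) + ∑ j, τ * (c (.inr j) - 1) = 0 := by
    rw [← Finset.mul_sum, ← Finset.mul_sum, ← mul_add, hsum', mul_zero]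
  rw [Fintype.sum_sum_type]
  linarith

lemma fromCols_add_fromCols {m α β : Type*} (A₁ B₁ : Matrix m α ℝ) (A₂ B₂ : Matrix m β ℝ) :
    fromCols A₁ A₂ + fromCols B₁ B₂ = fromCols (A₁ + B₁) (A₂ + B₂) := by
  ext i (j | j) <;> rfl

lemma fromCols_mul_fromRows_neg_one_eq_zero_iff {m α β : Type*} [Fintype α] [Fintype β]
    [DecidableEq β] (P : Matrix m α ℝ) (Q : Matrix m β ℝ) (X : Matrix α β ℝ) :
    fromCols P Q * fromRows X (-1 : Matrix β β ℝ) = 0 ↔ P * X = Q := by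
  rw [fromCols_mul_fromRows, Matrix.mul_neg, Matrix.mul_one, add_neg_eq_zero]

section TLS

variable {m α β : Type*} [Fintype m] [Fintype α] [Fintype β] [DecidableEq α] [DecidableEq β]

lemma sum_inr_le_frobSq_of_mul_eq_zero {A Δ : Matrix m (α ⊕ β) ℝ}
    {V : Matrix (α ⊕ β) (α ⊕ β) ℝ} (hV : Vᵀ * V = 1) {s : α ⊕ β → ℝ}
    (hA : Aᵀ * A = V * diagonal s * Vᵀ) {τ : ℝ} (hinr : ∀ j, s (.inr j) ≤ τ)
    (hinl : ∀ i, τ ≤ s (.inl i)) {X : Matrix α β ℝ}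
    (hX : (A + Δ) * fromRows X (-1 : Matrix β β ℝ) = 0) :
    ∑ j, s (.inr j) ≤ frobSq Δ := by
  set W := fromRows X (-1 : Matrix β β ℝ)
  have hW := isUnit_det_gram_fromRows_neg_one X
  set P := colProj W
  have hP : IsStarProjection P := isStarProjection_colProj hW
  have hVV : V * Vᵀ = 1 := mul_eq_one_comm.mp hV
  have hΔP : Δ * P = -(A * P) := by
    have hΔW : Δ * W = -(A * W) := eq_neg_of_add_eq_zero_right (by rwa [← Matrix.add_mul])
    simp only [P, colProj, ← Matrix.mul_assoc, hΔW, Matrix.neg_mul]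
  have htrace : ∑ j, (Vᵀ * P * V) j j = Fintype.card β := by
    rw [← trace_colProj hW, ← trace_transpose_mul_mul hVV]
    rfl
  calc ∑ j, s (.inr j)
      ≤ ∑ j, s j * (Vᵀ * P * V) j j :=
        sum_inr_le_sum_mul s _ τ hinr hinl (hP.transpose_mul_mul hVV).diag_mem_Icc htrace
    _ = frobSq (A * P) := (frobSq_mul_eq_sum_diag hA hP).symm
    _ = frobSq (Δ * P) := by rw [hΔP, frobSq_neg]
    _ ≤ frobSq Δ := frobSq_mul_le hP Δ

lemma exists_mul_eq_zero_and_frobSq_eq_sum_inr {A : Matrix m (α ⊕ β) ℝ}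
    {V₁₁ : Matrix α α ℝ} {V₁₂ : Matrix α β ℝ} {V₂₁ : Matrix β α ℝ} {V₂₂ : Matrix β β ℝ}
    (hV : (fromBlocks V₁₁ V₁₂ V₂₁ V₂₂)ᵀ * fromBlocks V₁₁ V₁₂ V₂₁ V₂₂ = 1) {s : α ⊕ β → ℝ}
    (hA : Aᵀ * A = fromBlocks V₁₁ V₁₂ V₂₁ V₂₂ * diagonal s * (fromBlocks V₁₁ V₁₂ V₂₁ V₂₂)ᵀ)
    (hV₂₂ : IsUnit V₂₂.det) :
    ∃ (X : Matrix α β ℝ) (Δ : Matrix m (α ⊕ β) ℝ),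
      (A + Δ) * fromRows X (-1 : Matrix β β ℝ) = 0 ∧ frobSq Δ = ∑ j, s (.inr j) := by
  set V := fromBlocks V₁₁ V₁₂ V₂₁ V₂₂
  set K : Matrix (α ⊕ β) β ℝ := fromRows 0 1
  set Y := V * K
  have hVtY : Vᵀ * Y = K := by rw [← Matrix.mul_assoc, hV, Matrix.one_mul]
  have hY : Yᵀ * Y = 1 := by
    rw [transpose_mul, Matrix.mul_assoc, hVtY, transpose_fromRows, fromCols_mul_fromRows]
    simp
  have hQ := isStarProjection_mul_transpose hY
  have hW : fromRows (-(V₁₂ * V₂₂⁻¹)) (-1 : Matrix β β ℝ) = -(Y * V₂₂⁻¹) := by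
    simp [Y, V, K, fromBlocks_mul_fromRows, mul_nonsing_inv _ hV₂₂]
  have hYY : Yᵀ * (Y * V₂₂⁻¹) = V₂₂⁻¹ := by rw [← Matrix.mul_assoc, hY, Matrix.one_mul]
  refine ⟨-(V₁₂ * V₂₂⁻¹), -(A * (Y * Yᵀ)), ?_, ?_⟩
  · rw [hW, ← sub_eq_add_neg, Matrix.mul_neg]
    simp only [Matrix.sub_mul, Matrix.mul_assoc, hYY, sub_self, neg_zero]
  · have hKKt : Vᵀ * (Y * Yᵀ) * V = fromBlocks 0 0 0 1 := by
      rw [← Matrix.mul_assoc, hVtY, Matrix.mul_assoc, ← transpose_transpose V, ← transpose_mul,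
        hVtY, transpose_fromRows, fromRows_mul_fromCols]
      simp
    rw [frobSq_neg, frobSq_mul_eq_sum_diag hA hQ, hKKt, Fintype.sum_sum_type]
    simp

end TLS

lemma transpose_mul_self_eq_of_eq_mul_mul {m k : Type*} [Fintype m] [Fintype k]
    [DecidableEq m] {A : Matrix m k ℝ} {U : Matrix m m ℝ} {S : Matrix m k ℝ} {V : Matrix k k ℝ}
    (hU : Uᵀ * U = 1) (hA : A = U * S * Vᵀ) : Aᵀ * A = V * (Sᵀ * S) * Vᵀ := by
  rw [hA]
  simp only [transpose_mul, transpose_transpose, Matrix.mul_assoc]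
  rw [← Matrix.mul_assoc Uᵀ U, hU, Matrix.one_mul]

lemma transpose_mul_self_of_injective {m κ : Type*} [Fintype m] [DecidableEq m] [DecidableEq κ]
    {f : κ → m} (hf : f.Injective) (t : κ → ℝ) :
    (of fun i j => if i = f j then t j else 0 : Matrix m κ ℝ)ᵀ *
        of (fun i j => if i = f j then t j else 0) = diagonal fun j => t j ^ 2 := by
  ext j l
  by_cases hjl : j = l
  · subst hjl
    simp [mul_apply, sq]
  · have hflj : f l ≠ f j := hf.ne (Ne.symm hjl)
    simp [mul_apply, hjl, hflj]

lemma transpose_mul_self_eq_of_svd {M N : ℕ} {κ : Type*} [Fintype κ] [DecidableEq κ]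
    (hNM : N ≤ M) {e : κ → Fin N} (he : e.Injective) (σ : Fin N → ℝ) {A : Matrix (Fin M) κ ℝ}
    {U : Matrix (Fin M) (Fin M) ℝ} {V : Matrix κ κ ℝ} (hU : Uᵀ * U = 1)
    (hA : A = U * (of fun (i : Fin M) j => if (i : ℕ) = (e j : ℕ) then σ (e j) else 0) * Vᵀ) :
    Aᵀ * A = V * diagonal (fun j => σ (e j) ^ 2) * Vᵀ := by
  have hS : (of fun (i : Fin M) j => if (i : ℕ) = (e j : ℕ) then σ (e j) else 0) =
      of fun i j => if i = Fin.castLE hNM (e j) then σ (e j) else 0 := by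
    ext
    simp [Fin.ext_iff]
  rw [transpose_mul_self_eq_of_eq_mul_mul hU hA, hS,
    transpose_mul_self_of_injective (fun _ _ h => he (Fin.castLE_injective hNM h))]

lemma Fin.sum_filter_le_eq_sum_natAdd {M : Type*} [AddCommMonoid M] {n d : ℕ}
    (g : Fin (n + d) → M) :
    ∑ i ∈ Finset.univ.filter (fun i : Fin (n + d) => n ≤ (i : ℕ)), g i =
      ∑ j : Fin d, g (Fin.natAdd n j) := by
  rw [Finset.sum_filter, Fin.sum_univ_add, Finset.sum_eq_zero fun i _ => if_neg (by simp),
    zero_add]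
  simp

/-- under the hypotheses of the TLS theorem, the minimum of
`‖[Ẽ, G̃]‖_F` over all `(X, Ẽ, G̃)` with `(C + Ẽ) X = D + G̃` equals
`(σ_{n+1}² + … + σ_{n+d}²)^{1/2}`. -/
theorem tls_min_value {M n d : ℕ} (hd : 0 < d) (hM : n + d ≤ M)
    (C : Matrix (Fin M) (Fin n) ℝ) (D : Matrix (Fin M) (Fin d) ℝ)
    (U : Matrix (Fin M) (Fin M) ℝ) (hU : Uᵀ * U = 1)
    (V₁₁ : Matrix (Fin n) (Fin n) ℝ) (V₁₂ : Matrix (Fin n) (Fin d) ℝ)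
    (V₂₁ : Matrix (Fin d) (Fin n) ℝ) (V₂₂ : Matrix (Fin d) (Fin d) ℝ)
    (hV : (fromBlocks V₁₁ V₁₂ V₂₁ V₂₂)ᵀ * fromBlocks V₁₁ V₁₂ V₂₁ V₂₂ = 1)
    (σ : Fin (n + d) → ℝ) (hσpos : ∀ i, 0 < σ i) (hσdec : Antitone σ)
    (hSVD : fromCols C D =
      U * (Matrix.of fun (i : Fin M) (j : Fin n ⊕ Fin d) =>
            if (i : ℕ) = ((finSumFinEquiv j : Fin (n + d)) : ℕ)
            then σ (finSumFinEquiv j) else 0) *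
        (fromBlocks V₁₁ V₁₂ V₂₁ V₂₂)ᵀ)
    (hV₂₂ : IsUnit V₂₂.det) :
    IsLeast
      {r : ℝ | ∃ (X : Matrix (Fin n) (Fin d) ℝ)
        (E : Matrix (Fin M) (Fin n) ℝ) (G : Matrix (Fin M) (Fin d) ℝ),
        (C + E) * X = D + G ∧ r = frob (fromCols E G)}
      (Real.sqrt (∑ i ∈ Finset.univ.filter (fun i : Fin (n + d) => n ≤ (i : ℕ)),
        σ i ^ 2)) := by
  set s : Fin n ⊕ Fin d → ℝ := fun j => σ (finSumFinEquiv j) ^ 2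
  have hA : (fromCols C D)ᵀ * fromCols C D =
      fromBlocks V₁₁ V₁₂ V₂₁ V₂₂ * diagonal s * (fromBlocks V₁₁ V₁₂ V₂₁ V₂₂)ᵀ :=
    transpose_mul_self_eq_of_svd hM finSumFinEquiv.injective σ hU hSVD
  have hsq_le {i j : Fin (n + d)} (hij : i ≤ j) : σ j ^ 2 ≤ σ i ^ 2 :=
    pow_le_pow_left₀ (hσpos j).le (hσdec hij) 2
  have hinr (j : Fin d) : s (.inr j) ≤ σ ⟨n, by omega⟩ ^ 2 :=
    hsq_le (by simp [Fin.le_def])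
  have hinl (i : Fin n) : σ ⟨n, by omega⟩ ^ 2 ≤ s (.inl i) :=
    hsq_le (by simp [Fin.le_def])
  have hfeas (X E G) : (C + E) * X = D + G ↔
      (fromCols C D + fromCols E G) * fromRows X (-1 : Matrix (Fin d) (Fin d) ℝ) = 0 := by
    rw [fromCols_add_fromCols]
    exact (fromCols_mul_fromRows_neg_one_eq_zero_iff _ _ X).symm
  rw [Fin.sum_filter_le_eq_sum_natAdd]
  refine ⟨?_, ?_⟩
  · obtain ⟨X, Δ, hX, hΔ⟩ := exists_mul_eq_zero_and_frobSq_eq_sum_inr hV hA hV₂₂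
    refine ⟨X, Δ.toCols₁, Δ.toCols₂, (hfeas _ _ _).2 (by rwa [fromCols_toCols]), ?_⟩
    rw [fromCols_toCols, frob, ← frobSq, hΔ]
    rfl
  · rintro r ⟨X, E, G, hXEG, rfl⟩
    exact Real.sqrt_le_sqrt
      (sum_inr_le_frobSq_of_mul_eq_zero hV hA hinr hinl ((hfeas X E G).1 hXEG))
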